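/- arXiv:2112.09080 — 3 statements merged into one kernel-verified Lean document; each statement's English description precedes it below -/
import Mathlib

section
/- Let Γ be a submonoid of the nonnegative rationals ℚ≥0 (under addition), R a nonzero commutative ring, and α ∈ Γ with α ≠ 0. Then X^α − 1 is not a unit in the monoid ring R[X;Γ]. -/
namespace AddMonoidAlgebra

variable {R M : Type*} [CommRing R] [AddMonoid M]

-- `lift R R M 1` is the augmentation `R[X;M] → R`, `X^m ↦ 1`.
theorem lift_one_of'_sub_one (a : M) : lift R R M 1 (of' R M a - 1) = 0 := by
  simp

theorem not_isUnit_of'_sub_one [Nontrivial R] (a : M) : ¬IsUnit (of' R M a - 1) := fun h ↦ by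
  simpa only [lift_one_of'_sub_one, not_isUnit_zero] using h.map (lift R R M 1)

end AddMonoidAlgebra

theorem stmt2_general (Γ : AddSubmonoid ℚ≥0) (R : Type*) [CommRing R] [Nontrivial R]
    (α : Γ) :
    ¬ IsUnit (AddMonoidAlgebra.of' R Γ α - 1) :=
  AddMonoidAlgebra.not_isUnit_of'_sub_one α

/-- For a submonoid `Γ` of `ℚ≥0`, a nonzero commutative ring `R`
and `0 ≠ α ∈ Γ`, the element `X^α - 1` is not a unit in `R[X;Γ]`. -/
theorem stmt2 (Γ : AddSubmonoid ℚ≥0) (R : Type*) [CommRing R] [Nontrivial R]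
    (α : Γ) (hα : α ≠ 0) :
    ¬ IsUnit (AddMonoidAlgebra.of' R Γ α - 1) :=
  stmt2_general Γ R α
end

section
/- Let p and q be primes and M = ℕ∖{1} the numerical monoid generated by 2 and 3, with 𝔽_p[X;M] viewed as the subring of 𝔽_p[X] of polynomials with no degree-1 term. Then X^q − 1 factors nontrivially (as a product of two nonunits) in 𝔽_p[X;M] if and only if X^q − 1 factors in 𝔽_p[X] as a product of two traceless polynomials. -/
open Polynomial

/-- The subring `𝔽_p[X;M]` of `𝔽_p[X]` (for `M = ⟨2,3⟩`), consisting of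
polynomials whose coefficient on `X^1` vanishes. -/
def MRing (p : ℕ) : Subring (Polynomial (ZMod p)) where
  carrier := {f | f.coeff 1 = 0}
  zero_mem' := by simp
  one_mem' := by simp [Polynomial.coeff_one]
  add_mem' := by
    intro a b ha hb
    simp only [Set.mem_setOf_eq, Polynomial.coeff_add] at *
    simp [ha, hb]
  neg_mem' := by
    intro a ha
    simp only [Set.mem_setOf_eq, Polynomial.coeff_neg] at *
    simp [ha]
  mul_mem' := by
    intro a b ha hb
    simp only [Set.mem_setOf_eq] at *
    rw [Polynomial.coeff_mul, Finset.Nat.sum_antidiagonal_eq_sum_range_succ_mk]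
    simp [Finset.sum_range_succ, ha, hb]

/-- A polynomial of degree `m ≥ 1` is traceless if its coefficient on `X^{m-1}` is zero. -/
def Traceless {p : ℕ} (f : Polynomial (ZMod p)) : Prop :=
  1 ≤ f.natDegree ∧ f.coeff (f.natDegree - 1) = 0

/-!
Reversal `f ↦ X^{deg f} f(1/X)` exchanges the coefficient of `X` with the coefficient of
`X^{deg f - 1}` as long as `f(0) ≠ 0`, which holds for every factor of `X^q - 1`. Since
`(X^q - 1)^rev = -(X^q - 1)`, the map `(g, h) ↦ (-g^rev, h^rev)` turns factorizations of
`X^q - 1` inside `𝔽_p[X;M]` into factorizations into traceless polynomials and back. It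
preserves degrees, and a factor is a nonunit of `𝔽_p[X;M]` exactly when it has positive
degree, because the inverse of a nonzero constant is again a constant.
-/

namespace Polynomial

section Semiring

variable {R : Type*} [Semiring R]

lemma natDegree_reverse_of_coeff_zero_ne_zero {f : R[X]} (h0 : f.coeff 0 ≠ 0) :
    f.reverse.natDegree = f.natDegree := by
  rw [reverse_natDegree, natTrailingDegree_eq_zero.2 (Or.inr h0), Nat.sub_zero]

lemma nextCoeff_reverse {f : R[X]} (h0 : f.coeff 0 ≠ 0) : f.reverse.nextCoeff = f.coeff 1 := by
  rcases Nat.eq_zero_or_pos f.natDegree with hd | hd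
  · rw [nextCoeff, natDegree_reverse_of_coeff_zero_ne_zero h0, if_pos hd,
      coeff_eq_zero_of_natDegree_lt (hd ▸ Nat.zero_lt_one)]
  · rw [nextCoeff_of_natDegree_pos (natDegree_reverse_of_coeff_zero_ne_zero h0 ▸ hd),
      natDegree_reverse_of_coeff_zero_ne_zero h0, coeff_reverse, revAt_le (Nat.sub_le _ _),
      Nat.sub_sub_self hd]

end Semiring

section CommRing

variable {R : Type*} [CommRing R] [Nontrivial R]

lemma reverse_X_pow_sub_one (n : ℕ) : (X ^ n - 1 : R[X]).reverse = -(X ^ n - 1) := by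
  have hXn : (X ^ n : R[X]).reverse = 1 := by
    rw [← one_mul (X ^ n), reverse_mul_X_pow, ← C_1, reverse_C]
  rw [sub_eq_add_neg, ← C_1, ← C_neg, reverse_add_C, hXn, natDegree_X_pow, C_neg, C_1]
  ring

lemma coeff_zero_ne_zero_of_dvd_X_pow_sub_one {n : ℕ} (hn : 0 < n) {f : R[X]}
    (hf : f ∣ X ^ n - 1) : f.coeff 0 ≠ 0 := by
  intro h0
  have hX : (X : R[X]) ∣ X ^ n - 1 := (X_dvd_iff.2 h0).trans hf
  rw [X_dvd_iff, coeff_sub, coeff_X_pow, if_neg hn.ne, coeff_one_zero, zero_sub] at hX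
  exact neg_ne_zero.2 one_ne_zero hX

end CommRing

end Polynomial

section Traceless

variable {p : ℕ}

lemma mem_MRing_iff {f : (ZMod p)[X]} : f ∈ MRing p ↔ f.coeff 1 = 0 := Iff.rfl

lemma reverse_mem_MRing_iff {f : (ZMod p)[X]} : f.reverse ∈ MRing p ↔ f.nextCoeff = 0 := by
  rw [mem_MRing_iff, coeff_one_reverse]

lemma traceless_iff {f : (ZMod p)[X]} : Traceless f ↔ 0 < f.natDegree ∧ f.nextCoeff = 0 := by
  refine and_congr_right fun hd => ?_
  rw [nextCoeff_of_natDegree_pos hd]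

lemma traceless_neg {f : (ZMod p)[X]} : Traceless (-f) ↔ Traceless f := by
  rw [Traceless, Traceless, natDegree_neg, coeff_neg, neg_eq_zero]

lemma traceless_reverse_iff {f : (ZMod p)[X]} (h0 : f.coeff 0 ≠ 0) :
    Traceless f.reverse ↔ 0 < f.natDegree ∧ f ∈ MRing p := by
  rw [traceless_iff, natDegree_reverse_of_coeff_zero_ne_zero h0, nextCoeff_reverse h0,
    mem_MRing_iff]

end Traceless

namespace MRing

variable {p : ℕ}

lemma isUnit_iff [Fact p.Prime] {x : MRing p} : IsUnit x ↔ IsUnit (x : (ZMod p)[X]) := by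
  refine ⟨fun hx => hx.map (MRing p).subtype, fun hx => ?_⟩
  obtain ⟨r, hr, hrx⟩ := Polynomial.isUnit_iff.1 hx
  have hinv : C r⁻¹ ∈ MRing p := by rw [mem_MRing_iff, coeff_C, if_neg one_ne_zero]
  refine IsUnit.of_mul_eq_one (a := x) ⟨C r⁻¹, hinv⟩ (Subtype.ext ?_)
  change (x : (ZMod p)[X]) * C r⁻¹ = 1
  rw [← hrx, ← C_mul, mul_inv_cancel₀ hr.ne_zero, C_1]

lemma not_isUnit_of_natDegree_pos [Fact p.Prime] {x : MRing p} (hx : 0 < (x : (ZMod p)[X]).natDegree) :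
    ¬IsUnit x :=
  fun hu => Polynomial.not_isUnit_of_natDegree_pos _ hx (hu.map (MRing p).subtype)

lemma natDegree_pos_of_not_isUnit_of_dvd_monic [Fact p.Prime] {x : MRing p} {f : (ZMod p)[X]}
    (hf : f.Monic) (hx : ¬IsUnit x) (hxf : (x : (ZMod p)[X]) ∣ f) :
    0 < (x : (ZMod p)[X]).natDegree :=
  Polynomial.natDegree_pos_of_not_isUnit_of_dvd_monic hf (isUnit_iff.not.1 hx) hxf

end MRing

/-- `X^q - 1` factors nontrivially in `𝔽_p[X;M]` iff it factors as a
product of two traceless polynomials in `𝔽_p[X]`. -/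
theorem stmt5 (p q : ℕ) (hp : p.Prime) (hq : q.Prime) :
    (∃ g h : MRing p, ¬ IsUnit g ∧ ¬ IsUnit h ∧
        (X ^ q - 1 : Polynomial (ZMod p)) = (g : Polynomial (ZMod p)) * h) ↔
      (∃ g h : Polynomial (ZMod p), Traceless g ∧ Traceless h ∧
        (X ^ q - 1 : Polynomial (ZMod p)) = g * h) := by
  have := Fact.mk hp
  have hmonic : (X ^ q - 1 : (ZMod p)[X]).Monic := by
    simpa using monic_X_pow_sub_C (1 : ZMod p) hq.ne_zero
  have hswap {g h : (ZMod p)[X]} (e : X ^ q - 1 = g * h) : X ^ q - 1 = -g.reverse * h.reverse := by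
    rw [neg_mul, ← reverse_mul_of_domain, ← e, reverse_X_pow_sub_one, neg_neg]
  have hcoeff {g : (ZMod p)[X]} : g ∣ X ^ q - 1 → g.coeff 0 ≠ 0 :=
    coeff_zero_ne_zero_of_dvd_X_pow_sub_one hq.pos
  constructor
  · rintro ⟨g, h, hg, hh, e⟩
    have hgF : (g : (ZMod p)[X]) ∣ X ^ q - 1 := Dvd.intro _ e.symm
    have hhF : (h : (ZMod p)[X]) ∣ X ^ q - 1 := Dvd.intro_left _ e.symm
    refine ⟨_, _, traceless_neg.2 ((traceless_reverse_iff (hcoeff hgF)).2 ⟨?_, g.2⟩),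
      (traceless_reverse_iff (hcoeff hhF)).2 ⟨?_, h.2⟩, hswap e⟩
    · exact MRing.natDegree_pos_of_not_isUnit_of_dvd_monic hmonic hg hgF
    · exact MRing.natDegree_pos_of_not_isUnit_of_dvd_monic hmonic hh hhF
  · rintro ⟨g, h, hg, hh, e⟩
    have hg0 := hcoeff (Dvd.intro _ e.symm)
    have hh0 := hcoeff (Dvd.intro_left _ e.symm)
    refine ⟨⟨-g.reverse, neg_mem (reverse_mem_MRing_iff.2 (traceless_iff.1 hg).2)⟩,
      ⟨h.reverse, reverse_mem_MRing_iff.2 (traceless_iff.1 hh).2⟩, ?_, ?_, hswap e⟩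
    · refine MRing.not_isUnit_of_natDegree_pos ?_
      rw [natDegree_neg, natDegree_reverse_of_coeff_zero_ne_zero hg0]
      exact (traceless_iff.1 hg).1
    · refine MRing.not_isUnit_of_natDegree_pos ?_
      rw [natDegree_reverse_of_coeff_zero_ne_zero hh0]
      exact (traceless_iff.1 hh).1
end

section
/- Let p ≠ q be primes and suppose the q-th cyclotomic polynomial Φ_q has a traceless irreducible factor in 𝔽_p[X]. Then X^q − 1 factors nontrivially in 𝔽_p[X;M], where M = ⟨2,3⟩. -/
open Polynomial

/-- If `Φ_q` has a traceless irreducible factor in `𝔽_p[X]`, then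
`X^q - 1` factors nontrivially in `𝔽_p[X;M]`. -/
theorem stmt6 (p q : ℕ) (hp : p.Prime) (hq : q.Prime) (hpq : p ≠ q)
    (m : Polynomial (ZMod p)) (hirr : Irreducible m) (htr : Traceless m)
    (hdvd : m ∣ Polynomial.cyclotomic q (ZMod p)) :
    ∃ g h : MRing p, ¬ IsUnit g ∧ ¬ IsUnit h ∧
      (X ^ q - 1 : Polynomial (ZMod p)) = (g : Polynomial (ZMod p)) * h := by
  haveI : Fact p.Prime := ⟨hp⟩
  obtain ⟨hd1, htr2⟩ := htr
  have hq2 : 2 ≤ q := hq.two_le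
  -- m divides X^q - 1
  obtain ⟨h, hfac⟩ : m ∣ (X ^ q - 1 : Polynomial (ZMod p)) :=
    hdvd.trans (Polynomial.cyclotomic.dvd_X_pow_sub_one q (ZMod p))
  have hdeg : (X ^ q - 1 : Polynomial (ZMod p)).natDegree = q := by
    simpa using (Polynomial.natDegree_X_pow_sub_C (n := q) (r := (1 : ZMod p)))
  have hXq0 : (X ^ q - 1 : Polynomial (ZMod p)) ≠ 0 := by
    intro h0
    have := congrArg (fun f => Polynomial.coeff f 0) h0
    simp [Polynomial.coeff_X_pow, hq.pos.ne] at this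
  have hm0 : m ≠ 0 := by rintro rfl; simp [hfac] at hXq0
  have hh0 : h ≠ 0 := by rintro rfl; simp [hfac] at hXq0
  -- constant coefficients are nonzero
  have hc : m.coeff 0 * h.coeff 0 = -1 := by
    have := congrArg (fun f => Polynomial.coeff f 0) hfac
    simpa [Polynomial.coeff_X_pow, hq.pos.ne, Polynomial.mul_coeff_zero] using this.symm
  have hmc0 : m.coeff 0 ≠ 0 := by
    intro h0; rw [h0, zero_mul] at hc; exact (neg_ne_zero.mpr one_ne_zero) hc.symm
  have hhc0 : h.coeff 0 ≠ 0 := by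
    intro h0; rw [h0, mul_zero] at hc; exact (neg_ne_zero.mpr one_ne_zero) hc.symm
  -- degrees
  have hsum : m.natDegree + h.natDegree = q := by
    rw [← Polynomial.natDegree_mul hm0 hh0, ← hfac, hdeg]
  have hmle : m.natDegree ≤ q - 1 := by
    have := Polynomial.natDegree_le_of_dvd hdvd (Polynomial.cyclotomic_ne_zero q (ZMod p))
    rwa [Polynomial.natDegree_cyclotomic, Nat.totient_prime hq] at this
  have hhd1 : 1 ≤ h.natDegree := by omega
  -- trailing degrees are zero
  have hmt : m.natTrailingDegree = 0 := Polynomial.natTrailingDegree_eq_zero.mpr (Or.inr hmc0)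
  have hht : h.natTrailingDegree = 0 := Polynomial.natTrailingDegree_eq_zero.mpr (Or.inr hhc0)
  -- reverse of X^q - 1
  have hrevXq : (X ^ q - 1 : Polynomial (ZMod p)).reverse = 1 - X ^ q := by
    rw [Polynomial.reverse, hdeg, Polynomial.reflect_sub, Polynomial.reflect_one,
      Polynomial.reflect_monomial, Polynomial.revAt_le (le_refl q), Nat.sub_self, pow_zero]
  have hrevmul : m.reverse * h.reverse = 1 - X ^ q := by
    rw [← Polynomial.reverse_mul_of_domain, ← hfac, hrevXq]
  -- coeff 1 of reverse m is zero
  have hrm1 : m.reverse.coeff 1 = 0 := by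
    rw [Polynomial.coeff_reverse, Polynomial.revAt_le hd1]
    exact htr2
  -- coeff 1 of reverse h is zero
  have hrh1 : h.reverse.coeff 1 = 0 := by
    have h1 : (m.reverse * h.reverse).coeff 1 = 0 := by
      rw [hrevmul]
      simp [Polynomial.coeff_X_pow, (Nat.ne_of_lt (by omega : 1 < q)), Polynomial.coeff_one]
    rw [Polynomial.coeff_mul, Finset.Nat.sum_antidiagonal_eq_sum_range_succ_mk] at h1
    simp only [Finset.sum_range_succ, Finset.sum_range_zero, zero_add, hrm1, zero_mul,
      add_zero, Nat.sub_self] at h1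
    have hlc : m.reverse.coeff 0 ≠ 0 := by
      rw [Polynomial.coeff_zero_reverse]
      exact Polynomial.leadingCoeff_ne_zero.mpr hm0
    rcases mul_eq_zero.mp h1 with h2 | h2
    · exact absurd h2 hlc
    · exact h2
  -- the two factors
  refine ⟨⟨-m.reverse, ?_⟩, ⟨h.reverse, hrh1⟩, ?_, ?_, ?_⟩
  · show (-m.reverse).coeff 1 = 0
    rw [Polynomial.coeff_neg, hrm1, neg_zero]
  · intro hu
    have : IsUnit (-m.reverse) := hu.map (MRing p).subtype
    have : IsUnit m.reverse := (IsUnit.neg_iff _).mp this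
    have hdeg0 := Polynomial.natDegree_eq_zero_of_isUnit this
    rw [Polynomial.reverse_natDegree, hmt, Nat.sub_zero] at hdeg0
    omega
  · intro hu
    have : IsUnit h.reverse := hu.map (MRing p).subtype
    have hdeg0 := Polynomial.natDegree_eq_zero_of_isUnit this
    rw [Polynomial.reverse_natDegree, hht, Nat.sub_zero] at hdeg0
    omega
  · show (X ^ q - 1 : Polynomial (ZMod p)) = -m.reverse * h.reverse
    rw [neg_mul, hrevmul]
    ring
end
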